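/- A perfect subquasi-ideal of a Leibniz algebra L over a field F is an ideal of L: if H is a subquasi-ideal of L with [H,H] = H, then H is an ideal of L. -/
import Mathlib


/-! Basic definitions for (right) Leibniz algebras given by a bilinear bracket
on a vector space, following Towers, "Quasi-ideals of Leibniz algebras". -/

section LeibnizDefs

variable {F L : Type*} [Field F] [AddCommGroup L] [Module F L]

/-- The (right) Leibniz identity for a bilinear bracket `b`:
`[x,[y,z]] = [[x,y],z] - [[x,z],y]`. -/
def IsLeibniz (b : L →ₗ[F] L →ₗ[F] L) : Prop :=
  ∀ x y z : L, b x (b y z) = b (b x y) z - b (b x z) y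

/-- `[A,C]`: the span of all brackets `[a,c]` with `a ∈ A`, `c ∈ C`. -/
def bspan (b : L →ₗ[F] L →ₗ[F] L) (A C : Submodule F L) : Submodule F L :=
  Submodule.span F {z : L | ∃ a ∈ A, ∃ c ∈ C, z = b a c}

/-- A subalgebra is a subspace `H` with `[H,H] ⊆ H`. -/
def IsSubalgebra (b : L →ₗ[F] L →ₗ[F] L) (H : Submodule F L) : Prop :=
  bspan b H H ≤ H

/-- An ideal is a subspace `A` with `[A,L] + [L,A] ⊆ A`. -/
def IsIdeal (b : L →ₗ[F] L →ₗ[F] L) (A : Submodule F L) : Prop :=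
  bspan b A ⊤ ⊔ bspan b ⊤ A ≤ A

/-- A quasi-ideal of `L` is a subspace `H` with `[H,K] + [K,H] ⊆ H + K`
for every subspace `K` of `L`. -/
def IsQuasiIdeal (b : L →ₗ[F] L →ₗ[F] L) (H : Submodule F L) : Prop :=
  ∀ K : Submodule F L, bspan b H K ⊔ bspan b K H ≤ H ⊔ K

/-- `H` is a quasi-ideal of the subalgebra `E`: `H ⊆ E` and
`[H,K] + [K,H] ⊆ H + K` for every subspace `K` of `E`. -/
def IsQuasiIdealIn (b : L →ₗ[F] L →ₗ[F] L) (H E : Submodule F L) : Prop :=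
  H ≤ E ∧ ∀ K : Submodule F L, K ≤ E → bspan b H K ⊔ bspan b K H ≤ H ⊔ K

/-- `H` is an `m`-step subquasi-ideal of `L`: there is a chain of subalgebras
`H = H_m qu H_{m-1} qu ... qu H_0 = L`, each a quasi-ideal of the next.
(Here `C i` is `H_i`.) -/
def IsSubquasiIdealSteps (b : L →ₗ[F] L →ₗ[F] L) (m : ℕ) (H : Submodule F L) : Prop :=
  ∃ C : ℕ → Submodule F L, C 0 = ⊤ ∧ C m = H ∧
    (∀ i ≤ m, IsSubalgebra b (C i)) ∧
    ∀ i < m, IsQuasiIdealIn b (C (i + 1)) (C i)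

/-- `H` is a subquasi-ideal of `L` if it is an `m`-step subquasi-ideal for some `m`. -/
def IsSubquasiIdeal (b : L →ₗ[F] L →ₗ[F] L) (H : Submodule F L) : Prop :=
  ∃ m : ℕ, IsSubquasiIdealSteps b m H

/-- Lower central series: `lowerCentral b K n` is `K^{n+1}` in the paper's notation,
i.e. `K^1 = K`, `K^{k+1} = [K^k, K]`. -/
def lowerCentral (b : L →ₗ[F] L →ₗ[F] L) (K : Submodule F L) : ℕ → Submodule F L
  | 0 => K
  | n + 1 => bspan b (lowerCentral b K n) K

/-- Derived series: `derSeries b H n` is `H^{(n+1)}` in the paper's notation,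
i.e. `H^{(1)} = H`, `H^{(k+1)} = [H^{(k)}, H^{(k)}]`. -/
def derSeries (b : L →ₗ[F] L →ₗ[F] L) (H : Submodule F L) : ℕ → Submodule F L
  | 0 => H
  | n + 1 => bspan b (derSeries b H n) (derSeries b H n)

/-- The core `H_L` of `H`: the sum of all ideals of `L` contained in `H`. -/
def coreOf (b : L →ₗ[F] L →ₗ[F] L) (H : Submodule F L) : Submodule F L :=
  sSup {A : Submodule F L | IsIdeal b A ∧ A ≤ H}

/-- A derivation of the bracket `b`. -/
def IsDerivation (b : L →ₗ[F] L →ₗ[F] L) (d : L →ₗ[F] L) : Prop :=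
  ∀ x y : L, d (b x y) = b (d x) y + b x (d y)

/-- `I`: the span of all squares `[x,x]`, `x ∈ L`. -/
def sqSpan (b : L →ₗ[F] L →ₗ[F] L) : Submodule F L :=
  Submodule.span F {z : L | ∃ x : L, z = b x x}

/-- The centre `Z(L) = {z | [z,x] = [x,z] = 0 for all x}`. -/
def lcenter (b : L →ₗ[F] L →ₗ[F] L) : Submodule F L where
  carrier := {z : L | ∀ x : L, b z x = 0 ∧ b x z = 0}
  zero_mem' := by intro x; simp
  add_mem' := by
    intro y z hy hz x
    obtain ⟨h1, h2⟩ := hy x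
    obtain ⟨h3, h4⟩ := hz x
    constructor <;> simp [h1, h2, h3, h4]
  smul_mem' := by
    intro c z hz x
    obtain ⟨h1, h2⟩ := hz x
    constructor <;> simp [h1, h2]

/-- The centre of a subalgebra `E`, as a subspace of `L`:
`Z(E) = {z ∈ E | [z,x] = [x,z] = 0 for all x ∈ E}`. -/
def centerIn (b : L →ₗ[F] L →ₗ[F] L) (E : Submodule F L) : Submodule F L where
  carrier := {z : L | z ∈ E ∧ ∀ x ∈ E, b z x = 0 ∧ b x z = 0}
  zero_mem' := ⟨E.zero_mem, by intro x _; simp⟩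
  add_mem' := by
    intro y z hy hz
    refine ⟨E.add_mem hy.1 hz.1, fun x hx => ?_⟩
    obtain ⟨h1, h2⟩ := hy.2 x hx
    obtain ⟨h3, h4⟩ := hz.2 x hx
    constructor <;> simp [h1, h2, h3, h4]
  smul_mem' := by
    intro c z hz
    refine ⟨E.smul_mem c hz.1, fun x hx => ?_⟩
    obtain ⟨h1, h2⟩ := hz.2 x hx
    constructor <;> simp [h1, h2]

/-- The subalgebra generated by a set `S`. -/
def subalgGen (b : L →ₗ[F] L →ₗ[F] L) (S : Set L) : Submodule F L :=
  sInf {K : Submodule F L | IsSubalgebra b K ∧ S ⊆ K}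

/-- `x` is a left Engel element: for each `y` there is `n` with `R_x^n(y) = 0`,
where `R_x(y) = [y,x]`. -/
def IsLeftEngel (b : L →ₗ[F] L →ₗ[F] L) (x : L) : Prop :=
  ∀ y : L, ∃ n : ℕ, ((b.flip x) ^ n) y = 0

end LeibnizDefs

variable {F L : Type*} [Field F] [AddCommGroup L] [Module F L]

lemma bspan_le_of {b : L →ₗ[F] L →ₗ[F] L} {A C D : Submodule F L}
    (h : ∀ a ∈ A, ∀ c ∈ C, b a c ∈ D) : bspan b A C ≤ D := by
  rw [bspan, Submodule.span_le]
  rintro z ⟨a, ha, c, hc, rfl⟩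
  exact h a ha c hc

lemma mem_bspan {b : L →ₗ[F] L →ₗ[F] L} {A C : Submodule F L} {a c : L}
    (ha : a ∈ A) (hc : c ∈ C) : b a c ∈ bspan b A C :=
  Submodule.subset_span ⟨a, ha, c, hc, rfl⟩

/-- Key induction step: if `H ≤ E`, `[H,E] + [E,H] ⊆ H`, `H` is perfect, and `E` is a
quasi-ideal in `E'`, then `[H,E'] + [E',H] ⊆ H`. -/
lemma step_lemma (b : L →ₗ[F] L →ₗ[F] L) (hb : IsLeibniz b)
    (H E E' : Submodule F L) (hHE : H ≤ E)
    (hq : ∀ K : Submodule F L, K ≤ E' → bspan b E K ⊔ bspan b K E ≤ E ⊔ K)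
    (hE : bspan b H E ⊔ bspan b E H ≤ H)
    (hperf : bspan b H H = H) :
    bspan b H E' ⊔ bspan b E' H ≤ H := by
  have hHE1 : bspan b H E ≤ H := le_trans le_sup_left hE
  have hEH1 : bspan b E H ≤ H := le_trans le_sup_right hE
  -- decompositions coming from the quasi-ideal property
  have dec : ∀ u ∈ E, ∀ x ∈ E',
      (∃ e ∈ E, ∃ β : F, b u x = e + β • x) ∧ (∃ e ∈ E, ∃ β : F, b x u = e + β • x) := by
    intro u hu x hx
    have hKle : Submodule.span F ({x} : Set L) ≤ E' := by
      rw [Submodule.span_le, Set.singleton_subset_iff]; exact hx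
    have hxK : x ∈ Submodule.span F ({x} : Set L) := Submodule.mem_span_singleton_self x
    have h1 : b u x ∈ E ⊔ Submodule.span F ({x} : Set L) :=
      hq _ hKle (Submodule.mem_sup_left (mem_bspan hu hxK))
    have h2 : b x u ∈ E ⊔ Submodule.span F ({x} : Set L) :=
      hq _ hKle (Submodule.mem_sup_right (mem_bspan hxK hu))
    constructor
    · obtain ⟨e, he, z, hz, hez⟩ := Submodule.mem_sup.mp h1
      obtain ⟨β, rfl⟩ := Submodule.mem_span_singleton.mp hz
      exact ⟨e, he, β, hez.symm⟩
    · obtain ⟨e, he, z, hz, hez⟩ := Submodule.mem_sup.mp h2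
      obtain ⟨β, rfl⟩ := Submodule.mem_span_singleton.mp hz
      exact ⟨e, he, β, hez.symm⟩
  -- Stage 1: for all h ∈ H, x ∈ E', we have [h,x] ∈ E and [x,h] ∈ E.
  have stage1 : ∀ h ∈ H, ∀ x ∈ E', b h x ∈ E ∧ b x h ∈ E := by
    intro h hh
    have hh' : h ∈ bspan b H H := by rw [hperf]; exact hh
    refine Submodule.span_induction ?_ ?_ ?_ ?_ hh'
    · rintro z ⟨h1, hh1, h2, hh2, rfl⟩ x hx
      obtain ⟨⟨e1, he1, β, hd1⟩, ⟨e2, he2, γ, hd2⟩⟩ := dec h1 (hHE hh1) x hx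
      obtain ⟨_, ⟨e3, he3, δ, hd3⟩⟩ := dec h2 (hHE hh2) x hx
      constructor
      · -- [[h1,h2],x] = [[h1,x],h2] - [h1,[x,h2]]
        have hid : b (b h1 h2) x = b (b h1 x) h2 - b h1 (b x h2) := by
          have := hb h1 x h2
          rw [this]; abel
        have key : b (b h1 h2) x = (b e1 h2 + β • e3) - (b h1 e3 + δ • e1) := by
          rw [hid, hd1, hd3]
          simp only [map_add, map_smul, LinearMap.add_apply, LinearMap.smul_apply]
          rw [hd1, hd3]
          module
        rw [key]
        exact sub_mem
          (add_mem (hHE (hEH1 (mem_bspan he1 hh2))) (Submodule.smul_mem _ _ he3))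
          (add_mem (hHE (hHE1 (mem_bspan hh1 he3))) (Submodule.smul_mem _ _ he1))
      · -- [x,[h1,h2]] = [[x,h1],h2] - [[x,h2],h1]
        have hid : b x (b h1 h2) = b (b x h1) h2 - b (b x h2) h1 := hb x h1 h2
        have key : b x (b h1 h2) = (b e2 h2 + γ • e3) - (b e3 h1 + δ • e2) := by
          rw [hid, hd2, hd3]
          simp only [map_add, map_smul, LinearMap.add_apply, LinearMap.smul_apply]
          rw [hd2, hd3]
          module
        rw [key]
        exact sub_mem
          (add_mem (hHE (hEH1 (mem_bspan he2 hh2))) (Submodule.smul_mem _ _ he3))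
          (add_mem (hHE (hEH1 (mem_bspan he3 hh1))) (Submodule.smul_mem _ _ he2))
    · intro x _; simp
    · intro y z _ _ hy hz x hx
      obtain ⟨hy1, hy2⟩ := hy x hx
      obtain ⟨hz1, hz2⟩ := hz x hx
      constructor <;> simp only [map_add, LinearMap.add_apply] <;> exact add_mem ‹_› ‹_›
    · intro c y _ hy x hx
      obtain ⟨hy1, hy2⟩ := hy x hx
      constructor <;> simp only [map_smul, LinearMap.smul_apply] <;>
        exact Submodule.smul_mem _ _ ‹_›
  -- Stage 2: conclude [H,E'] + [E',H] ⊆ H.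
  refine sup_le (bspan_le_of ?_) (bspan_le_of ?_)
  · intro h hh x hx
    have hh' : h ∈ bspan b H H := by rw [hperf]; exact hh
    revert hh'
    refine fun hh' => Submodule.span_induction ?_ ?_ ?_ ?_ hh'
    · rintro z ⟨h1, hh1, h2, hh2, rfl⟩
      have hid : b (b h1 h2) x = b (b h1 x) h2 - b h1 (b x h2) := by
        have := hb h1 x h2
        rw [this]; abel
      rw [hid]
      exact sub_mem (hEH1 (mem_bspan (stage1 h1 hh1 x hx).1 hh2))
        (hHE1 (mem_bspan hh1 (stage1 h2 hh2 x hx).2))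
    · simp
    · intro y z _ _ hy hz
      simp only [map_add, LinearMap.add_apply]; exact add_mem hy hz
    · intro c y _ hy
      simp only [map_smul, LinearMap.smul_apply]; exact Submodule.smul_mem _ _ hy
  · intro x hx h hh
    have hh' : h ∈ bspan b H H := by rw [hperf]; exact hh
    revert hh'
    refine fun hh' => Submodule.span_induction ?_ ?_ ?_ ?_ hh'
    · rintro z ⟨h1, hh1, h2, hh2, rfl⟩
      have hid : b x (b h1 h2) = b (b x h1) h2 - b (b x h2) h1 := hb x h1 h2
      rw [hid]
      exact sub_mem (hEH1 (mem_bspan (stage1 h1 hh1 x hx).2 hh2))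
        (hEH1 (mem_bspan (stage1 h2 hh2 x hx).2 hh1))
    · simp
    · intro y z _ _ hy hz
      simp only [map_add]; exact add_mem hy hz
    · intro c y _ hy
      simp only [map_smul]; exact Submodule.smul_mem _ _ hy

/-- A perfect subquasi-ideal of a Leibniz algebra `L` is an ideal of `L`. -/
theorem perfect_subquasiIdeal_isIdeal (b : L →ₗ[F] L →ₗ[F] L) (hb : IsLeibniz b)
    (H : Submodule F L) (hH : IsSubquasiIdeal b H) (hperf : bspan b H H = H) :
    IsIdeal b H := by
  obtain ⟨m, C, hC0, hCm, _, hqu⟩ := hH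
  -- H is contained in every member of the chain
  have hle : ∀ j, j ≤ m → H ≤ C (m - j) := by
    intro j
    induction j with
    | zero => intro _; simp [hCm]
    | succ j ih =>
      intro hj
      have hj' : j ≤ m := Nat.le_of_succ_le hj
      have hlt : m - (j + 1) < m := by omega
      have := (hqu (m - (j + 1)) hlt).1
      have harith : m - (j + 1) + 1 = m - j := by omega
      rw [harith] at this
      exact le_trans (ih hj') this
  -- downward induction along the chain
  have key : ∀ j, j ≤ m → bspan b H (C (m - j)) ⊔ bspan b (C (m - j)) H ≤ H := by
    intro j
    induction j with
    | zero =>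
      intro _
      simp only [Nat.sub_zero, hCm, hperf, le_refl, sup_le_iff, and_self]
    | succ j ih =>
      intro hj
      have hj' : j ≤ m := Nat.le_of_succ_le hj
      have hlt : m - (j + 1) < m := by omega
      have hq := (hqu (m - (j + 1)) hlt).2
      have harith : m - (j + 1) + 1 = m - j := by omega
      rw [harith] at hq
      exact step_lemma b hb H (C (m - j)) (C (m - (j + 1))) (hle j hj') hq (ih hj') hperf
  have final := key m le_rfl
  rw [Nat.sub_self, hC0] at final
  exact final
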